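/- arXiv:1712.02648 — 5 statements merged into one kernel-verified Lean document; each statement's English description precedes it below -/
import Mathlib

section
/- Suppose 1 ≤ R < m and Σ_{k≥1} μ_k R^{−k} < ∞. Then: (i) the vector v belongs to ℓ²_R; (ii) χ defines a bounded (continuous) linear functional on ℓ²_R; and (iii) T defines a bounded linear operator on ℓ²_R. -/
open scoped BigOperators ENNReal

noncomputable section

abbrev H2 : Type := lp (fun _ : ℕ => ℂ) 2

/-- the vector `v = (m^{-k} 1[k ≥ 1])_k` -/
def vSeq (m : ℝ) : ℕ → ℂ := fun k => if k = 0 then 0 else ((m : ℂ))⁻¹ ^ k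

/-- the shift `S` -/
def shiftSeq (a : ℕ → ℂ) : ℕ → ℂ := fun k => if k = 0 then 0 else a (k - 1)

/-- the terms of the series defining `χ(a)` -/
def chiSum (μ : ℕ → ℝ) (a : ℕ → ℂ) : ℕ → ℂ := fun k => (μ (k+1) : ℂ) * (a (k+1) - a k)

/-- the linear functional `χ` -/
def chiSeq (μ : ℕ → ℝ) (a : ℕ → ℂ) : ℂ := ∑' k, chiSum μ a k

/-- the operator `T = S + χ(·) v` -/
def Tseq (μ : ℕ → ℝ) (m : ℝ) (a : ℕ → ℂ) : ℕ → ℂ :=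
  fun k => shiftSeq a k + chiSeq μ a * vSeq m k

/-- membership in `ℓ²_R` -/
def memEllR (R : ℝ) (a : ℕ → ℂ) : Prop :=
  Summable fun k => R ^ (2 * k) * ‖a k‖ ^ 2

/-- from the standard `ℓ²` model to an `ℓ²_R` sequence -/
def fromModel (R : ℝ) (b : ℕ → ℂ) : ℕ → ℂ := fun k => ((R : ℂ))⁻¹ ^ k * b k

/-- from an `ℓ²_R` sequence to its standard `ℓ²` model -/
def toModel (R : ℝ) (a : ℕ → ℂ) : ℕ → ℂ := fun k => (R : ℂ) ^ k * a k

/-- the generating function `μ̂(z) = Σ_{k≥1} μ_k z^k` -/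
def genFun (μ : ℕ → ℝ) (z : ℂ) : ℂ := ∑' k, (μ (k+1) : ℂ) * z ^ (k+1)

/-- `T'` is the bounded operator on the standard `ℓ²` model corresponding to `T` on `ℓ²_R`
under the isometric isomorphism `(a_k)_k ↦ (R^k a_k)_k`. -/
def Intertwines (μ : ℕ → ℝ) (m R : ℝ) (T' : H2 →L[ℂ] H2) : Prop :=
  ∀ b : H2, ∀ k, (T' b : ℕ → ℂ) k = toModel R (Tseq μ m (fromModel R (b : ℕ → ℂ))) k

/-! Conjugating by the isometry `a ↦ (R^k a_k)_k` of `ℓ²_R` onto `ℓ²` turns `S` into `R` times the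
unilateral shift and `v` into `((R/m)^k)_{k ≥ 1}`, which is square summable because `R < m`.
With `α_k := μ_{k+1} R^{-(k+1)}`, summable by hypothesis, the model of `χ` is
`b ↦ Σ_k α_k (b_{k+1} - R b_k)`: a difference of pairings with the `ℓ¹ ⊆ ℓ²` sequences `S α` and
`α`, hence continuous. Then `T = R S + χ(·) v` is a sum of bounded operators. -/

theorem memℓp_of_summable_norm {ι E : Type*} [NormedAddCommGroup E] {p : ℝ≥0∞} (hp : 1 ≤ p)
    {f : ι → E} (hf : Summable fun i => ‖f i‖) : Memℓp f p :=
  (memℓp_gen (p := 1) (by simpa using hf)).of_exponent_ge hp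

section Pairing

variable {ι 𝕜 : Type*} [RCLike 𝕜]

def lpPairing (α : lp (fun _ : ι => 𝕜) 2) : lp (fun _ : ι => 𝕜) 2 →L[𝕜] 𝕜 :=
  innerSL 𝕜 (star α)

theorem hasSum_lpPairing (α b : lp (fun _ : ι => 𝕜) 2) :
    HasSum (fun i => α i * b i) (lpPairing α b) := by
  have h := lp.hasSum_inner (𝕜 := 𝕜) (star α) b
  simp only [RCLike.inner_apply, lp.star_apply, RCLike.star_def, RCLike.conj_conj] at h
  simpa only [lpPairing, innerSL_apply_apply, mul_comm] using h

end Pairing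

theorem hasSum_comp_shiftSeq_iff {M : Type*} [AddCommGroup M] [TopologicalSpace M]
    [IsTopologicalAddGroup M] {g : ℂ → M} (hg : g 0 = 0) (a : ℕ → ℂ) {s : M} :
    HasSum (fun k => g (shiftSeq a k)) s ↔ HasSum (fun k => g (a k)) s := by
  rw [← hasSum_nat_add_iff' 1]
  simp [shiftSeq, hg]

theorem Memℓp.shiftSeq {p : ℝ≥0∞} (hp : 0 < p.toReal) {a : ℕ → ℂ} (ha : Memℓp a p) :
    Memℓp (shiftSeq a) p := by
  rw [memℓp_gen_iff hp] at ha ⊢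
  have hg : ‖(0 : ℂ)‖ ^ p.toReal = 0 := by simp [Real.zero_rpow hp.ne']
  exact ((hasSum_comp_shiftSeq_iff (g := fun z => ‖z‖ ^ p.toReal) hg a).2 ha.hasSum).summable

def shiftCLM : H2 →L[ℂ] H2 :=
  LinearMap.mkContinuous
    { toFun := fun b => ⟨shiftSeq b, (lp.memℓp b).shiftSeq (by norm_num)⟩
      map_add' := fun x y => lp.ext <| funext fun k => by
        change shiftSeq (x + y) k = shiftSeq x k + shiftSeq y k
        cases k <;> simp [shiftSeq]
      map_smul' := fun c x => by ext k; cases k <;> simp [shiftSeq] }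
    1 fun b => by
      rw [one_mul]
      refine lp.norm_le_of_tsum_le (by norm_num) (norm_nonneg b) (le_of_eq ?_)
      rw [lp.norm_rpow_eq_tsum (by norm_num)]
      exact ((hasSum_comp_shiftSeq_iff (g := fun z => ‖z‖ ^ (2 : ℝ≥0∞).toReal) (by simp) b).2
        ((lp.memℓp b).summable (by norm_num)).hasSum).tsum_eq

theorem coe_shiftCLM (b : H2) : ⇑(shiftCLM b) = shiftSeq b := rfl

def chiWeight (μ : ℕ → ℝ) (R : ℝ) : ℕ → ℂ := fun k => ((μ (k + 1) * R⁻¹ ^ (k + 1) : ℝ) : ℂ)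

theorem chiSum_fromModel (μ : ℕ → ℝ) {R : ℝ} (hR : R ≠ 0) (b : ℕ → ℂ) :
    chiSum μ (fromModel R b) =
      fun k => chiWeight μ R k * b (k + 1) - R * (chiWeight μ R k * b k) := by
  funext k
  simp only [chiSum, fromModel, chiWeight]
  have hRR : (R : ℂ) * (R : ℂ)⁻¹ = 1 := mul_inv_cancel₀ (by exact_mod_cast hR)
  push_cast
  linear_combination ((μ (k + 1) : ℂ) * (R : ℂ)⁻¹ ^ k * b k) * hRR

theorem memℓp_chiWeight (μ : ℕ → ℝ) {R : ℝ}
    (hμR : Summable fun k : ℕ => μ (k + 1) * R⁻¹ ^ (k + 1)) : Memℓp (chiWeight μ R) 2 :=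
  memℓp_of_summable_norm (by norm_num) <| by
    simpa only [chiWeight, Complex.norm_real, Real.norm_eq_abs] using hμR.abs

theorem exists_hasSum_chiSum_fromModel (μ : ℕ → ℝ) {R : ℝ} (hR : R ≠ 0)
    (hμR : Summable fun k : ℕ => μ (k + 1) * R⁻¹ ^ (k + 1)) :
    ∃ φ : H2 →L[ℂ] ℂ, ∀ b : H2, HasSum (chiSum μ (fromModel R b)) (φ b) := by
  set α : H2 := ⟨chiWeight μ R, memℓp_chiWeight μ hμR⟩
  refine ⟨lpPairing (shiftCLM α) - (R : ℂ) • lpPairing α, fun b => ?_⟩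
  have hshift : HasSum (fun k => chiWeight μ R k * b (k + 1)) (lpPairing (shiftCLM α) b) := by
    have h := hasSum_lpPairing (shiftCLM α) b
    rw [← hasSum_nat_add_iff' 1] at h
    simpa [coe_shiftCLM, shiftSeq, α] using h
  rw [chiSum_fromModel μ hR]
  simpa using hshift.sub ((hasSum_lpPairing α b).mul_left (R : ℂ))

theorem memEllR_iff_memℓp_toModel (R : ℝ) (a : ℕ → ℂ) :
    memEllR R a ↔ Memℓp (toModel R a) 2 := by
  rw [memℓp_gen_iff (by norm_num), memEllR]
  refine Iff.of_eq (congrArg Summable (funext fun k => ?_))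
  rw [toModel, ENNReal.toReal_ofNat, Real.rpow_two, norm_mul, norm_pow, Complex.norm_real,
    Real.norm_eq_abs, mul_pow, ← abs_pow, sq_abs, ← pow_mul, mul_comm k]

theorem memℓp_toModel_vSeq {m R : ℝ} (h : |R| < |m|) : Memℓp (toModel R (vSeq m)) 2 := by
  have hm : 0 < |m| := (abs_nonneg R).trans_lt h
  refine memℓp_of_summable_norm (by norm_num) <|
    (summable_geometric_of_lt_one (by positivity) ((div_lt_one hm).2 h)).of_nonneg_of_le
      (fun _ => norm_nonneg _) fun k => ?_
  rcases k with _ | k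
  · simp [toModel, vSeq]
  · simp [toModel, vSeq, div_eq_mul_inv, mul_pow]

theorem intertwines_shift_add_smulRight {μ : ℕ → ℝ} {m R : ℝ} (hR : R ≠ 0)
    (hv : Memℓp (toModel R (vSeq m)) 2) {φ : H2 →L[ℂ] ℂ}
    (hφ : ∀ b : H2, HasSum (chiSum μ (fromModel R b)) (φ b)) :
    Intertwines μ m R ((R : ℂ) • shiftCLM + φ.smulRight ⟨toModel R (vSeq m), hv⟩) := by
  intro b k
  change (R : ℂ) * shiftSeq b k + φ b * toModel R (vSeq m) k =
    toModel R (Tseq μ m (fromModel R b)) k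
  have hχ : chiSeq μ (fromModel R b) = φ b := (hφ b).tsum_eq
  rcases k with _ | k
  · simp [toModel, Tseq, shiftSeq, vSeq]
  · have hRR : (R : ℂ) ^ k * (R : ℂ)⁻¹ ^ k = 1 := by
      rw [← mul_pow, mul_inv_cancel₀ (by exact_mod_cast hR), one_pow]
    simp only [toModel, Tseq, hχ, shiftSeq, fromModel, Nat.add_one_ne_zero, if_false,
      Nat.add_sub_cancel]
    linear_combination (-(R : ℂ) * b k) * hRR

theorem statement0_general
    (μ : ℕ → ℝ) (m R : ℝ)
    (hR1 : 1 ≤ R) (hRm : R < m)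
    (hμR : Summable fun k : ℕ => μ (k + 1) * (R⁻¹) ^ (k + 1)) :
    memEllR R (vSeq m) ∧
    (∃ φ : H2 →L[ℂ] ℂ, ∀ b : H2,
      HasSum (chiSum μ (fromModel R (b : ℕ → ℂ))) (φ b)) ∧
    (∃ T' : H2 →L[ℂ] H2, Intertwines μ m R T') := by
  have hR : 0 < R := one_pos.trans_le hR1
  have hv : Memℓp (toModel R (vSeq m)) 2 := by
    refine memℓp_toModel_vSeq ?_
    rwa [abs_of_pos hR, abs_of_pos (hR.trans hRm)]
  obtain ⟨φ, hφ⟩ := exists_hasSum_chiSum_fromModel μ hR.ne' hμR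
  exact ⟨(memEllR_iff_memℓp_toModel R _).2 hv, ⟨φ, hφ⟩, _,
    intertwines_shift_add_smulRight hR.ne' hv hφ⟩

/-- If `1 ≤ R < m` and `Σ_{k≥1} μ_k R^{-k} < ∞`, then (i) `v ∈ ℓ²_R`;
(ii) `χ` defines a bounded linear functional on `ℓ²_R`; (iii) `T` defines a bounded linear
operator on `ℓ²_R` (both expressed in the standard `ℓ²` model via `(a_k) ↦ (R^k a_k)`). -/
theorem statement0
    (μ : ℕ → ℝ) (m R : ℝ)
    (hm : 1 < m) (hμnn : ∀ k, 0 ≤ μ k)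
    (hμm : HasSum (fun k : ℕ => μ (k + 1) * (m⁻¹) ^ (k + 1)) 1)
    (hR1 : 1 ≤ R) (hRm : R < m)
    (hμR : Summable fun k : ℕ => μ (k + 1) * (R⁻¹) ^ (k + 1)) :
    memEllR R (vSeq m) ∧
    (∃ φ : H2 →L[ℂ] ℂ, ∀ b : H2,
      HasSum (chiSum μ (fromModel R (b : ℕ → ℂ))) (φ b)) ∧
    (∃ T' : H2 →L[ℂ] H2, Intertwines μ m R T') :=
  statement0_general μ m R hR1 hRm hμR
end
end

section
/- Suppose 1 ≤ R < m and Σ_{k≥1} μ_k R^{−k} < ∞. Let λ be a complex number with |λ| > R and λ ≠ m, and define the sequence c(λ) := ((λ^{−k} − m^{−k})/(m − λ))_{k≥0}. Then c(λ) ∈ ℓ²_R and χ(c(λ)) = ((1 − λ)·μ̂(1/λ) + m − 1)/(m − λ). -/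
open scoped BigOperators ENNReal

noncomputable section

/-!
`c(λ)` is a multiple of the difference of the geometric sequences of ratios `λ⁻¹` and `m⁻¹`,
both smaller than `R⁻¹` in modulus, hence it lies in `ℓ²_R`. Since `λ⁻ᵏ = λ · λ^{-(k+1)}`, the
increments are `c_{k+1} - c_k = ((1 - λ) λ^{-(k+1)} + (m - 1) m^{-(k+1)}) / (m - λ)`, so `χ(c(λ))`
splits into `(1 - λ) μ̂(1/λ)` and `(m - 1) μ̂(1/m) = m - 1`; the series for `μ̂(1/λ)` converges
absolutely because it is dominated termwise by the one for `μ̂(1/R)`.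
-/

/-- The sequence `c(λ)` of the paper, with `w` in place of `m`. -/
def cSeq (lam w : ℂ) : ℕ → ℂ := fun k => (lam⁻¹ ^ k - w⁻¹ ^ k) / (w - lam)

lemma memEllR_geometric {R : ℝ} {z : ℂ} (hR : 0 ≤ R) (hz : R * ‖z‖ < 1) :
    memEllR R (fun k => z ^ k) := by
  have hterm : ∀ k : ℕ, R ^ (2 * k) * ‖z ^ k‖ ^ 2 = ((R * ‖z‖) ^ 2) ^ k := fun k => by
    rw [norm_pow, pow_mul, ← pow_mul ‖z‖, mul_comm k 2, pow_mul, ← mul_pow, ← mul_pow]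
  simp only [memEllR, hterm]
  exact summable_geometric_of_lt_one (by positivity)
    (pow_lt_one₀ (by positivity) hz two_ne_zero)

lemma memEllR.sub {R : ℝ} {a b : ℕ → ℂ} (ha : memEllR R a) (hb : memEllR R b) :
    memEllR R (a - b) := by
  have hRk (k : ℕ) : 0 ≤ R ^ (2 * k) := by rw [pow_mul]; positivity
  refine Summable.of_nonneg_of_le (fun k => mul_nonneg (hRk k) (by positivity)) (fun k => ?_)
    ((ha.mul_left 2).add (hb.mul_left 2))
  have hsq : ‖a k - b k‖ ^ 2 ≤ 2 * ‖a k‖ ^ 2 + 2 * ‖b k‖ ^ 2 := by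
    nlinarith [norm_sub_le (a k) (b k), norm_nonneg (a k - b k), sq_nonneg (‖a k‖ - ‖b k‖)]
  calc R ^ (2 * k) * ‖(a - b) k‖ ^ 2 ≤ R ^ (2 * k) * (2 * ‖a k‖ ^ 2 + 2 * ‖b k‖ ^ 2) :=
        mul_le_mul_of_nonneg_left hsq (hRk k)
    _ = 2 * (R ^ (2 * k) * ‖a k‖ ^ 2) + 2 * (R ^ (2 * k) * ‖b k‖ ^ 2) := by ring

lemma memEllR.div_const {R : ℝ} {a : ℕ → ℂ} (ha : memEllR R a) (c : ℂ) :
    memEllR R (fun k => a k / c) := by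
  have hterm : ∀ k : ℕ, R ^ (2 * k) * ‖a k / c‖ ^ 2 = ‖c‖⁻¹ ^ 2 * (R ^ (2 * k) * ‖a k‖ ^ 2) :=
    fun k => by rw [norm_div]; ring
  simp only [memEllR, hterm]
  exact ha.mul_left _

lemma memEllR_cSeq {R : ℝ} {lam w : ℂ} (hR : 0 ≤ R) (hlam : R < ‖lam‖) (hw : R < ‖w‖) :
    memEllR R (cSeq lam w) := by
  have hinv : ∀ z : ℂ, R < ‖z‖ → R * ‖z⁻¹‖ < 1 := fun z hz => by
    rw [norm_inv, ← div_eq_mul_inv]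
    exact (div_lt_one (hR.trans_lt hz)).mpr hz
  exact ((memEllR_geometric hR (hinv lam hlam)).sub
    (memEllR_geometric hR (hinv w hw))).div_const (w - lam)

lemma summable_genFun_of_norm_le {μ : ℕ → ℝ} {r : ℝ} {z : ℂ} (hμ : ∀ k, 0 ≤ μ k)
    (hr : Summable fun k : ℕ => μ (k + 1) * r ^ (k + 1)) (hz : ‖z‖ ≤ r) :
    Summable fun k : ℕ => (μ (k + 1) : ℂ) * z ^ (k + 1) := by
  refine Summable.of_norm_bounded hr fun k => ?_
  rw [norm_mul, norm_pow, Complex.norm_real, Real.norm_of_nonneg (hμ _)]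
  exact mul_le_mul_of_nonneg_left (pow_le_pow_left₀ (norm_nonneg _) hz _) (hμ _)

lemma chiSum_cSeq (μ : ℕ → ℝ) {lam w : ℂ} (hlam : lam ≠ 0) (hw : w ≠ 0) (k : ℕ) :
    chiSum μ (cSeq lam w) k = ((1 - lam) * ((μ (k + 1) : ℂ) * lam⁻¹ ^ (k + 1))
      + (w - 1) * ((μ (k + 1) : ℂ) * w⁻¹ ^ (k + 1))) / (w - lam) := by
  simp only [chiSum, cSeq]
  rw [← sub_div, mul_div_assoc']
  congr 1
  rw [pow_succ lam⁻¹ k, pow_succ w⁻¹ k]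
  linear_combination ((μ (k + 1) : ℂ) * lam⁻¹ ^ k) * mul_inv_cancel₀ hlam
    - ((μ (k + 1) : ℂ) * w⁻¹ ^ k) * mul_inv_cancel₀ hw

theorem statement2_general
    (μ : ℕ → ℝ) (m R : ℝ)
    (hμnn : ∀ k, 0 ≤ μ k)
    (hμm : HasSum (fun k : ℕ => μ (k + 1) * (m⁻¹) ^ (k + 1)) 1)
    (hR1 : 1 ≤ R) (hRm : R < m)
    (hμR : Summable fun k : ℕ => μ (k + 1) * (R⁻¹) ^ (k + 1))
    (lam : ℂ) (hlam : R < ‖lam‖) :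
    memEllR R (fun k => (lam⁻¹ ^ k - ((m : ℂ))⁻¹ ^ k) / ((m : ℂ) - lam)) ∧
    HasSum (chiSum μ (fun k => (lam⁻¹ ^ k - ((m : ℂ))⁻¹ ^ k) / ((m : ℂ) - lam)))
      (((1 - lam) * genFun μ lam⁻¹ + (m : ℂ) - 1) / ((m : ℂ) - lam)) := by
  have hR0 : 0 < R := zero_lt_one.trans_le hR1
  have hmR : R < ‖(m : ℂ)‖ := by rwa [Complex.norm_real, Real.norm_of_nonneg (by linarith)]
  have hlam0 : lam ≠ 0 := norm_pos_iff.mp (hR0.trans hlam)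
  have hm0 : (m : ℂ) ≠ 0 := norm_pos_iff.mp (hR0.trans hmR)
  refine ⟨memEllR_cSeq hR0.le hlam hmR, ?_⟩
  have hlamSum : HasSum (fun k : ℕ => (μ (k + 1) : ℂ) * lam⁻¹ ^ (k + 1)) (genFun μ lam⁻¹) :=
    (summable_genFun_of_norm_le hμnn hμR <| by
      rw [norm_inv]; exact inv_anti₀ hR0 hlam.le).hasSum
  have hmSum : HasSum (fun k : ℕ => (μ (k + 1) : ℂ) * (m : ℂ)⁻¹ ^ (k + 1)) 1 := by
    simpa using Complex.hasSum_ofReal.mpr hμm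
  have hsum := ((hlamSum.mul_left (1 - lam)).add (hmSum.mul_left ((m : ℂ) - 1))).div_const
    ((m : ℂ) - lam)
  rw [← funext (chiSum_cSeq μ hlam0 hm0)] at hsum
  rwa [mul_one, ← add_sub_assoc] at hsum

/-- For `|λ| > R`, `λ ≠ m`, the sequence
`c(λ)_k = (λ^{-k} − m^{-k})/(m − λ)` lies in `ℓ²_R` and
`χ(c(λ)) = ((1 − λ)μ̂(1/λ) + m − 1)/(m − λ)`. -/
theorem statement2
    (μ : ℕ → ℝ) (m R : ℝ)
    (hm : 1 < m) (hμnn : ∀ k, 0 ≤ μ k)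
    (hμm : HasSum (fun k : ℕ => μ (k + 1) * (m⁻¹) ^ (k + 1)) 1)
    (hR1 : 1 ≤ R) (hRm : R < m)
    (hμR : Summable fun k : ℕ => μ (k + 1) * (R⁻¹) ^ (k + 1))
    (lam : ℂ) (hlam : R < ‖lam‖) (hlamm : lam ≠ (m : ℂ)) :
    memEllR R (fun k => (lam⁻¹ ^ k - ((m : ℂ))⁻¹ ^ k) / ((m : ℂ) - lam)) ∧
    HasSum (chiSum μ (fun k => (lam⁻¹ ^ k - ((m : ℂ))⁻¹ ^ k) / ((m : ℂ) - lam)))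
      (((1 - lam) * genFun μ lam⁻¹ + (m : ℂ) - 1) / ((m : ℂ) - lam)) :=
  statement2_general μ m R hμnn hμm hR1 hRm hμR lam hlam
end
end

section
/- Let (Ω, F, P) be a probability space with a filtration (F_n)_{n≥−1} (F_{−1} trivial), let m > 1 and m^{−1/2} < r ≤ 1 be reals, and let C₀, c > 0 be constants. Suppose: for each n ≥ 0, B_n is a nonnegative, F_{n−1}-measurable, integrable random variable with E[B_n] ≤ C₀·mⁿ; and for each n ≥ 0 and k ≥ 1, W_{n,k} is an F_n-measurable square-integrable random variable with E[W_{n,k} | F_{n−1}] = 0 and E[W_{n,k}² | F_{n−1}] ≤ c·r^{−2k}·B_n almost surely. Set W_{n,k} := 0 for n < 0 and define W_n := Σ_{k=1}^{n} W_{n−k,k} for n ≥ 1. Then there exists a constant C < ∞ (depending only on m, r, C₀, c) such that for all n ≥ 1 and k ≥ 1: E[W_{n,k}²] ≤ C·r^{−2k}·mⁿ and E[W_n²] ≤ C·mⁿ. -/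
/-!
Conditioning on `ℱ (n - 1)` gives `E[W_{n,k}²] ≤ c r^{-2k} E[B_n] ≤ c C₀ r^{-2k} mⁿ`. The summands
of `W_n` live at distinct times and are martingale differences, hence orthogonal in `L²`, so
`E[W_n²] = Σ_k E[W_{n-k,k}²] ≤ c C₀ mⁿ Σ_k qᵏ` with `q = r⁻² / m`, and `q < 1` because `r > m^{-1/2}`.
-/

open MeasureTheory

section Moments

variable {Ω : Type*} {m m0 : MeasurableSpace Ω} {μ : Measure Ω}

theorem integral_le_mul_of_condExp_le_mul (hm : m ≤ m0) [SigmaFinite (μ.trim hm)]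
    {f g : Ω → ℝ} {a b : ℝ} (ha : 0 ≤ a) (hg : Integrable g μ) (hgb : ∫ ω, g ω ∂μ ≤ b)
    (hfg : ∀ᵐ ω ∂μ, μ[f|m] ω ≤ a * g ω) : ∫ ω, f ω ∂μ ≤ a * b := by
  calc ∫ ω, f ω ∂μ = ∫ ω, μ[f|m] ω ∂μ := (integral_condExp hm).symm
    _ ≤ ∫ ω, a * g ω ∂μ := integral_mono_ae integrable_condExp (hg.const_mul a) hfg
    _ ≤ a * b := by rw [integral_const_mul]; gcongr

theorem integral_mul_eq_zero_of_condExp_eq_zero (hm : m ≤ m0) [SigmaFinite (μ.trim hm)]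
    {f g : Ω → ℝ} (hf : StronglyMeasurable[m] f) (hfg : Integrable (f * g) μ)
    (hg : Integrable g μ) (hg0 : μ[g|m] =ᵐ[μ] 0) : ∫ ω, f ω * g ω ∂μ = 0 := by
  have hzero : μ[f * g|m] =ᵐ[μ] 0 := by
    filter_upwards [condExp_mul_of_stronglyMeasurable_left hf hfg hg, hg0] with ω hω hω0
    simp [hω, hω0]
  simpa using (integral_condExp hm (f := f * g)).symm.trans (integral_congr_ae hzero)

theorem integral_sq_sum_eq_sum_integral_sq {ι : Type*} (s : Finset ι) {X : ι → Ω → ℝ}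
    (hX : ∀ i ∈ s, MemLp (X i) 2 μ)
    (horth : ∀ i ∈ s, ∀ j ∈ s, i ≠ j → ∫ ω, X i ω * X j ω ∂μ = 0) :
    ∫ ω, (∑ i ∈ s, X i ω) ^ 2 ∂μ = ∑ i ∈ s, ∫ ω, X i ω ^ 2 ∂μ := by
  have hint : ∀ i ∈ s, ∀ j ∈ s, Integrable (fun ω => X i ω * X j ω) μ :=
    fun i hi j hj => (hX i hi).integrable_mul (hX j hj)
  simp_rw [sq, Finset.sum_mul_sum]
  rw [integral_finsetSum _ fun i hi => integrable_finsetSum _ fun j hj => hint i hi j hj]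
  refine Finset.sum_congr rfl fun i hi => ?_
  rw [integral_finsetSum _ fun j hj => hint i hi j hj]
  exact Finset.sum_eq_single_of_mem i hi fun j hj hji => horth i hi j hj hji.symm

theorem MeasureTheory.Filtration.integral_mul_eq_zero_of_lt [IsFiniteMeasure μ] (ℱ : Filtration ℤ m0)
    {X Y : Ω → ℝ} {a b : ℤ} (hab : a < b) (hXm : Measurable[ℱ a] X) (hX : MemLp X 2 μ)
    (hY : MemLp Y 2 μ) (hY0 : μ[Y|ℱ (b - 1)] =ᵐ[μ] 0) : ∫ ω, X ω * Y ω ∂μ = 0 :=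
  integral_mul_eq_zero_of_condExp_eq_zero (ℱ.le _)
    (hXm.mono (ℱ.mono (by omega)) le_rfl).stronglyMeasurable (hX.integrable_mul hY)
    (hY.integrable one_le_two) hY0

end Moments

theorem inv_sq_lt_of_inv_sqrt_lt {m r : ℝ} (hm : 0 < m) (hrm : (Real.sqrt m)⁻¹ < r) :
    r⁻¹ ^ 2 < m := by
  have hsqrt : 0 < Real.sqrt m := Real.sqrt_pos.2 hm
  have hr : 0 < r := (inv_pos.2 hsqrt).trans hrm
  exact (Real.lt_sqrt (inv_nonneg.2 hr.le)).1 ((inv_lt_comm₀ hsqrt hr).1 hrm)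

theorem inv_pow_mul_pow_sub_eq {m r : ℝ} (hm : m ≠ 0) {n k : ℕ} (hkn : k ≤ n) :
    r⁻¹ ^ (2 * k) * m ^ (n - k) = m ^ n * (r⁻¹ ^ 2 / m) ^ k := by
  rw [pow_sub₀ m hm hkn, pow_mul, div_pow]
  field_simp

theorem sum_range_pow_succ_le_inv_one_sub {q : ℝ} (hq0 : 0 ≤ q) (hq1 : q < 1) (n : ℕ) :
    ∑ j ∈ Finset.range n, q ^ (j + 1) ≤ 1 / (1 - q) := by
  have hgeom := geom_sum_Ico_le_of_lt_one (m := 1) (n := n + 1) hq0 hq1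
  rw [Finset.sum_Ico_eq_sum_range, Nat.add_sub_cancel] at hgeom
  calc ∑ j ∈ Finset.range n, q ^ (j + 1) = ∑ j ∈ Finset.range n, q ^ (1 + j) := by
        simp only [add_comm]
    _ ≤ q ^ 1 / (1 - q) := hgeom
    _ ≤ 1 / (1 - q) := by gcongr; linarith

theorem statement10_general
    {Ω : Type*} {m0 : MeasurableSpace Ω} (P : Measure Ω) [IsProbabilityMeasure P]
    (ℱ : Filtration ℤ m0)
    (m r C₀ c : ℝ) (hm : 1 < m) (hrm : (Real.sqrt m)⁻¹ < r)
    (hC₀ : 0 < C₀) (hc : 0 < c)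
    (B : ℕ → Ω → ℝ)
    (hBint : ∀ n : ℕ, Integrable (B n) P)
    (hBbd : ∀ n : ℕ, ∫ ω, B n ω ∂P ≤ C₀ * m ^ n)
    (W : ℕ → ℕ → Ω → ℝ)
    (hWmeas : ∀ n k : ℕ, 1 ≤ k → Measurable[ℱ (n : ℤ)] (W n k))
    (hWsq : ∀ n k : ℕ, 1 ≤ k → MemLp (W n k) 2 P)
    (hWcond : ∀ n k : ℕ, 1 ≤ k → P[W n k|ℱ ((n : ℤ) - 1)] =ᵐ[P] 0)
    (hWvar : ∀ n k : ℕ, 1 ≤ k →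
      ∀ᵐ ω ∂P, (P[fun ω' => (W n k ω') ^ 2|ℱ ((n : ℤ) - 1)]) ω ≤ c * r⁻¹ ^ (2 * k) * B n ω)
    (Wtot : ℕ → Ω → ℝ)
    (hWtot : ∀ n ω, Wtot n ω = ∑ k ∈ Finset.range n, W (n - (k + 1)) (k + 1) ω) :
    ∃ C : ℝ, ∀ n k : ℕ, 1 ≤ n → 1 ≤ k →
      (∫ ω, (W n k ω) ^ 2 ∂P ≤ C * r⁻¹ ^ (2 * k) * m ^ n) ∧
      (∫ ω, (Wtot n ω) ^ 2 ∂P ≤ C * m ^ n) := by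
  have hm0 : 0 < m := by linarith
  have hr : 0 < r := (inv_pos.2 (Real.sqrt_pos.2 hm0)).trans hrm
  set q := r⁻¹ ^ 2 / m
  have hq0 : 0 ≤ q := by positivity
  have hq1 : q < 1 := (div_lt_one hm0).2 (inv_sq_lt_of_inv_sqrt_lt hm0 hrm)
  have hmoment (n k : ℕ) (hk : 1 ≤ k) :
      ∫ ω, W n k ω ^ 2 ∂P ≤ c * C₀ * (r⁻¹ ^ (2 * k) * m ^ n) :=
    (integral_le_mul_of_condExp_le_mul (ℱ.le _) (by positivity) (hBint n) (hBbd n)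
      (hWvar n k hk)).trans_eq (by ring)
  have horth (a b k₁ k₂ : ℕ) (hk₁ : 1 ≤ k₁) (hk₂ : 1 ≤ k₂) (hab : a ≠ b) :
      ∫ ω, W a k₁ ω * W b k₂ ω ∂P = 0 := by
    rcases hab.lt_or_gt with h | h
    · exact ℱ.integral_mul_eq_zero_of_lt (by omega) (hWmeas a k₁ hk₁) (hWsq a k₁ hk₁)
        (hWsq b k₂ hk₂) (hWcond b k₂ hk₂)
    · simpa only [mul_comm] using ℱ.integral_mul_eq_zero_of_lt (by omega) (hWmeas b k₂ hk₂)
        (hWsq b k₂ hk₂) (hWsq a k₁ hk₁) (hWcond a k₁ hk₁)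
  refine ⟨c * C₀ / (1 - q), fun n k _ hk => ⟨?_, ?_⟩⟩
  · calc ∫ ω, W n k ω ^ 2 ∂P ≤ c * C₀ * (r⁻¹ ^ (2 * k) * m ^ n) := hmoment n k hk
      _ ≤ c * C₀ / (1 - q) * (r⁻¹ ^ (2 * k) * m ^ n) :=
        mul_le_mul_of_nonneg_right (le_div_self (by positivity) (by linarith) (by linarith))
          (by positivity)
      _ = _ := by ring
  simp_rw [hWtot]
  rw [integral_sq_sum_eq_sum_integral_sq _ (fun j _ => hWsq _ _ (by omega))
    fun i hi j hj hij => horth _ _ _ _ (by omega) (by omega) (by simp at hi hj; omega)]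
  calc ∑ j ∈ Finset.range n, ∫ ω, W (n - (j + 1)) (j + 1) ω ^ 2 ∂P
      ≤ ∑ j ∈ Finset.range n, c * C₀ * m ^ n * q ^ (j + 1) :=
        Finset.sum_le_sum fun j hj => (hmoment _ _ (by omega)).trans_eq <| by
          rw [inv_pow_mul_pow_sub_eq (k := j + 1) hm0.ne' (Finset.mem_range.1 hj)]; ring
    _ ≤ c * C₀ * m ^ n * (1 / (1 - q)) := by
      rw [← Finset.mul_sum]; gcongr; exact sum_range_pow_succ_le_inv_one_sub hq0 hq1 n
    _ = _ := by ring

/-- Second-moment bounds: if each `W_{n,k}` is `F_n`-measurable, centered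
given `F_{n-1}`, with conditional second moment at most `c r^{-2k} B_n`, and `E B_n ≤ C₀ mⁿ`,
then `E[W_{n,k}²] ≤ C r^{-2k} mⁿ` and `E[W_n²] ≤ C mⁿ` for `W_n = Σ_{k=1}^n W_{n-k,k}`. -/
theorem statement10
    {Ω : Type*} {m0 : MeasurableSpace Ω} (P : Measure Ω) [IsProbabilityMeasure P]
    (ℱ : Filtration ℤ m0) (hbot : ℱ (-1) = ⊥)
    (m r C₀ c : ℝ) (hm : 1 < m) (hr1 : r ≤ 1) (hrm : (Real.sqrt m)⁻¹ < r)
    (hC₀ : 0 < C₀) (hc : 0 < c)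
    (B : ℕ → Ω → ℝ)
    (hBmeas : ∀ n : ℕ, Measurable[ℱ ((n : ℤ) - 1)] (B n))
    (hBint : ∀ n : ℕ, Integrable (B n) P)
    (hBnn : ∀ n : ℕ, 0 ≤ᵐ[P] B n)
    (hBbd : ∀ n : ℕ, ∫ ω, B n ω ∂P ≤ C₀ * m ^ n)
    (W : ℕ → ℕ → Ω → ℝ)
    (hWmeas : ∀ n k : ℕ, 1 ≤ k → Measurable[ℱ (n : ℤ)] (W n k))
    (hWsq : ∀ n k : ℕ, 1 ≤ k → MemLp (W n k) 2 P)
    (hWcond : ∀ n k : ℕ, 1 ≤ k → P[W n k|ℱ ((n : ℤ) - 1)] =ᵐ[P] 0)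
    (hWvar : ∀ n k : ℕ, 1 ≤ k →
      ∀ᵐ ω ∂P, (P[fun ω' => (W n k ω') ^ 2|ℱ ((n : ℤ) - 1)]) ω ≤ c * r⁻¹ ^ (2 * k) * B n ω)
    (Wtot : ℕ → Ω → ℝ)
    (hWtot : ∀ n ω, Wtot n ω = ∑ k ∈ Finset.range n, W (n - (k + 1)) (k + 1) ω) :
    ∃ C : ℝ, ∀ n k : ℕ, 1 ≤ n → 1 ≤ k →
      (∫ ω, (W n k ω) ^ 2 ∂P ≤ C * r⁻¹ ^ (2 * k) * m ^ n) ∧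
      (∫ ω, (Wtot n ω) ^ 2 ∂P ≤ C * m ^ n) :=
  statement10_general P ℱ m r C₀ c hm hrm hC₀ hc B hBint hBbd W hWmeas hWsq hWcond hWvar Wtot hWtot
end

section
/- Let m > 1 be real, let λ be a real number with |λ| < m^{1/2}, and let σ₁₁, σ₁₂, σ₂₂ be reals. Then ((m−1)/m³)·(1/(2π))·∫₀^{2π} ( σ₁₁·|z(θ)|² + 2σ₁₂·Re(z(θ))·|z(θ)|² + σ₂₂·|z(θ)|⁴ ) / ( |1 − z(θ)|² · |1 − λ·z(θ)|² ) dθ = ( (m+λ)·(σ₁₁ + σ₂₂/m) + 2(1+λ)·σ₁₂ ) / ( m²·(m−λ)·(m−λ²) ), where z(θ) := m^{−1/2}·e^{iθ}. -/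
/-!
On the circle `z = r e^{iθ}`, `r = m^{-1/2}`, one has `|1 - z|² = P_r(θ)` and
`|1 - λz|² = P_s(θ)` with `s = λr` and `P_r(θ) = 1 - 2r cos θ + r²`, so the integrand is
`(u + v cos θ) / (P_r P_s)`. Since `P_r` is affine in `cos θ`, partial fractions reduce the
integral to `∫ 1/P_r = 2π/(1 - r²)` (and `∫ 1/P_r² = 2π(1 + r²)/(1 - r²)³` when `r = s`),
both obtained from explicit primitives; `|λ| < √m` is exactly `|s| < 1`.
-/

open Real

noncomputable def poissonDen (r θ : ℝ) : ℝ := 1 - 2 * r * cos θ + r ^ 2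

section PoissonDen

variable {r : ℝ}

lemma one_sub_mul_cos_pos (hr : |r| < 1) (θ : ℝ) : 0 < 1 - r * cos θ := by
  have : |r * cos θ| < 1 := by
    rw [abs_mul]; nlinarith [abs_cos_le_one θ, abs_nonneg r, abs_nonneg (cos θ)]
  linarith [(abs_lt.mp this).2]

lemma poissonDen_pos (hr : |r| < 1) (θ : ℝ) : 0 < poissonDen r θ := by
  have hsq : poissonDen r θ = (1 - r * cos θ) ^ 2 + (r * sin θ) ^ 2 := by
    unfold poissonDen; linear_combination (-r ^ 2) * sin_sq_add_cos_sq θ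
  have := one_sub_mul_cos_pos hr θ
  rw [hsq]
  positivity

lemma continuous_poissonDen (r : ℝ) : Continuous (poissonDen r) := by
  unfold poissonDen; fun_prop

lemma intervalIntegrable_inv_poissonDen_pow (hr : |r| < 1) (n : ℕ) (a b : ℝ) :
    IntervalIntegrable (fun θ => (poissonDen r θ ^ n)⁻¹) MeasureTheory.volume a b :=
  ((continuous_poissonDen r).pow n |>.inv₀ fun θ => pow_ne_zero n (poissonDen_pos hr θ).ne')
    |>.intervalIntegrable a b

lemma intervalIntegrable_inv_poissonDen (hr : |r| < 1) {a b : ℝ} :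
    IntervalIntegrable (fun θ => (poissonDen r θ)⁻¹) MeasureTheory.volume a b := by
  simpa using intervalIntegrable_inv_poissonDen_pow hr 1 a b

lemma hasDerivAt_poissonDen (r θ : ℝ) :
    HasDerivAt (poissonDen r) (2 * r * sin θ) θ := by
  unfold poissonDen
  exact ((((hasDerivAt_cos θ).const_mul (2 * r)).const_sub 1).add_const (r ^ 2)).congr_deriv
    (by ring)

lemma one_sub_sq_pos (hr : |r| < 1) : 0 < 1 - r ^ 2 := by
  nlinarith [sq_abs r, abs_nonneg r]

/-- Unlike the textbook primitive through `tan (θ / 2)`, this one has no jumps,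
as `1 - r cos θ > 0`. -/
lemma hasDerivAt_inv_poissonDen_primitive (hr : |r| < 1) (θ : ℝ) :
    HasDerivAt (fun θ => (θ + 2 * arctan (r * sin θ / (1 - r * cos θ))) / (1 - r ^ 2))
      (poissonDen r θ)⁻¹ θ := by
  have hc := one_sub_mul_cos_pos hr θ
  have hP := poissonDen_pos hr θ
  have hr2 := one_sub_sq_pos hr
  have hquot : HasDerivAt (fun x => r * sin x / (1 - r * cos x))
      ((r * cos θ * (1 - r * cos θ) - r * sin θ * (r * sin θ)) / (1 - r * cos θ) ^ 2) θ :=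
    ((hasDerivAt_sin θ).const_mul r).div
      (((hasDerivAt_cos θ).const_mul r).const_sub 1 |>.congr_deriv (by ring)) hc.ne'
  refine (((hasDerivAt_id θ).add (((hasDerivAt_arctan _).comp θ hquot).const_mul 2)).div_const
    _).congr_deriv ?_
  have hpyth := sin_sq_add_cos_sq θ
  have hsum : 1 + (r * sin θ / (1 - r * cos θ)) ^ 2 = poissonDen r θ / (1 - r * cos θ) ^ 2 := by
    unfold poissonDen; field_simp; linear_combination r ^ 2 * hpyth
  rw [hsum]
  unfold poissonDen at hP ⊢
  field_simp
  linear_combination (-2 * r ^ 2) * hpyth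

lemma integral_inv_poissonDen (hr : |r| < 1) :
    ∫ θ in (0 : ℝ)..2 * π, (poissonDen r θ)⁻¹ = 2 * π / (1 - r ^ 2) := by
  rw [intervalIntegral.integral_eq_sub_of_hasDerivAt
    (fun θ _ => hasDerivAt_inv_poissonDen_primitive hr θ)
    (intervalIntegrable_inv_poissonDen hr)]
  simp

/-- `d/dθ (sin θ / P) = ((1 + r²) cos θ - 2r) / P²` and `cos θ = (1 + r² - P) / 2r` combine with
the primitive of `1 / P` into a primitive of `1 / P²`. -/
lemma hasDerivAt_inv_poissonDen_sq_primitive (hr : |r| < 1) (θ : ℝ) :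
    HasDerivAt (fun θ => ((1 + r ^ 2) * ((θ + 2 * arctan (r * sin θ / (1 - r * cos θ))) /
        (1 - r ^ 2)) + 2 * r * sin θ / poissonDen r θ) / (1 - r ^ 2) ^ 2)
      (poissonDen r θ ^ 2)⁻¹ θ := by
  have hP := poissonDen_pos hr θ
  have hr2 := one_sub_sq_pos hr
  refine ((((hasDerivAt_inv_poissonDen_primitive hr θ).const_mul (1 + r ^ 2)).add
    (((hasDerivAt_sin θ).const_mul (2 * r)).div (hasDerivAt_poissonDen r θ) hP.ne')).div_const
      _).congr_deriv ?_
  have hpyth := sin_sq_add_cos_sq θ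
  unfold poissonDen at hP ⊢
  field_simp
  congr 1
  linear_combination (-4 * r ^ 2) * hpyth

lemma integral_inv_poissonDen_sq (hr : |r| < 1) :
    ∫ θ in (0 : ℝ)..2 * π, (poissonDen r θ ^ 2)⁻¹ = 2 * π * (1 + r ^ 2) / (1 - r ^ 2) ^ 3 := by
  rw [intervalIntegral.integral_eq_sub_of_hasDerivAt
    (fun θ _ => hasDerivAt_inv_poissonDen_sq_primitive hr θ)
    (intervalIntegrable_inv_poissonDen_pow hr 2 0 (2 * π))]
  have := (one_sub_sq_pos hr).ne'
  simp
  field_simp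

lemma integral_div_poissonDen_sq (hr : |r| < 1) (u v : ℝ) :
    ∫ θ in (0 : ℝ)..2 * π, (u + v * cos θ) / poissonDen r θ ^ 2
      = 2 * π * (u * (1 + r ^ 2) + 2 * r * v) / (1 - r ^ 2) ^ 3 := by
  rcases eq_or_ne r 0 with rfl | hr0
  · simp [poissonDen, intervalIntegral.integral_add, intervalIntegral.integral_const_mul]
  have hpf : ∀ θ, (u + v * cos θ) / poissonDen r θ ^ 2
      = (u + v * (1 + r ^ 2) / (2 * r)) * (poissonDen r θ ^ 2)⁻¹
        + -v / (2 * r) * (poissonDen r θ)⁻¹ := by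
    intro θ
    have hP := (poissonDen_pos hr θ).ne'
    field_simp
    unfold poissonDen
    ring
  simp only [hpf]
  rw [intervalIntegral.integral_add
      ((intervalIntegrable_inv_poissonDen_pow hr 2 _ _).const_mul _)
      ((intervalIntegrable_inv_poissonDen hr).const_mul _),
    intervalIntegral.integral_const_mul, intervalIntegral.integral_const_mul,
    integral_inv_poissonDen_sq hr, integral_inv_poissonDen hr]
  have := (one_sub_sq_pos hr).ne'
  field_simp
  ring

variable {s : ℝ}

lemma integral_div_poissonDen_mul_of_ne (hr : |r| < 1) (hs : |s| < 1) (hrs : r ≠ s) (u v : ℝ) :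
    ∫ θ in (0 : ℝ)..2 * π, (u + v * cos θ) / (poissonDen r θ * poissonDen s θ)
      = 2 * π * (u * (1 + r * s) + v * (r + s)) / ((1 - r ^ 2) * (1 - s ^ 2) * (1 - r * s)) := by
  have hrs' : 0 < 1 - r * s := by
    have : |r * s| < 1 := by
      rw [abs_mul]; nlinarith [abs_nonneg r, abs_nonneg s]
    linarith [(abs_lt.mp this).2]
  have hsub : r - s ≠ 0 := sub_ne_zero.mpr hrs
  have hpf : ∀ θ, (u + v * cos θ) / (poissonDen r θ * poissonDen s θ)
      = (2 * u * r + (1 + r ^ 2) * v) / (2 * (r - s) * (1 - r * s)) * (poissonDen r θ)⁻¹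
        + -(2 * u * s + (1 + s ^ 2) * v) / (2 * (r - s) * (1 - r * s)) * (poissonDen s θ)⁻¹ := by
    intro θ
    have hPr := (poissonDen_pos hr θ).ne'
    have hPs := (poissonDen_pos hs θ).ne'
    field_simp
    unfold poissonDen
    ring
  simp only [hpf]
  rw [intervalIntegral.integral_add
      ((intervalIntegrable_inv_poissonDen hr).const_mul _)
      ((intervalIntegrable_inv_poissonDen hs).const_mul _),
    intervalIntegral.integral_const_mul, intervalIntegral.integral_const_mul,
    integral_inv_poissonDen hr, integral_inv_poissonDen hs]
  have := (one_sub_sq_pos hr).ne'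
  have := (one_sub_sq_pos hs).ne'
  field_simp
  ring

lemma integral_div_poissonDen_mul (hr : |r| < 1) (hs : |s| < 1) (u v : ℝ) :
    ∫ θ in (0 : ℝ)..2 * π, (u + v * cos θ) / (poissonDen r θ * poissonDen s θ)
      = 2 * π * (u * (1 + r * s) + v * (r + s)) / ((1 - r ^ 2) * (1 - s ^ 2) * (1 - r * s)) := by
  rcases ne_or_eq r s with hrs | rfl
  · exact integral_div_poissonDen_mul_of_ne hr hs hrs u v
  simp only [← sq, integral_div_poissonDen_sq hr]
  have := (one_sub_sq_pos hr).ne'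
  field_simp
  ring

end PoissonDen

lemma norm_one_sub_ofReal_mul_exp_sq (a θ : ℝ) :
    ‖1 - (a : ℂ) * Complex.exp (θ * Complex.I)‖ ^ 2 = poissonDen a θ := by
  rw [Complex.sq_norm, Complex.normSq_apply]
  simp only [Complex.sub_re, Complex.sub_im, Complex.one_re, Complex.one_im, Complex.re_ofReal_mul,
    Complex.im_ofReal_mul, Complex.exp_ofReal_mul_I_re, Complex.exp_ofReal_mul_I_im]
  unfold poissonDen
  linear_combination a ^ 2 * sin_sq_add_cos_sq θ

/-- For `m > 1`, real `λ` with `λ² < m`, and `z(θ) = m^{-1/2} e^{iθ}`: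
`((m−1)/m³)·(1/2π)·∫₀^{2π} (σ₁₁|z|² + 2σ₁₂ Re(z)|z|² + σ₂₂|z|⁴)/(|1−z|²|1−λz|²) dθ
 = ((m+λ)(σ₁₁+σ₂₂/m) + 2(1+λ)σ₁₂)/(m²(m−λ)(m−λ²))`. -/
theorem statement13
    (m lam σ₁₁ σ₁₂ σ₂₂ : ℝ) (hm : 1 < m) (hlam : |lam| < Real.sqrt m)
    (z : ℝ → ℂ) (hz : ∀ θ : ℝ, z θ = ((Real.sqrt m)⁻¹ : ℝ) * Complex.exp (θ * Complex.I)) :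
    ((m - 1) / m ^ 3) * (1 / (2 * π)) *
      ∫ θ in (0 : ℝ)..(2 * π),
        (σ₁₁ * ‖z θ‖ ^ 2 + 2 * σ₁₂ * (z θ).re * ‖z θ‖ ^ 2 + σ₂₂ * ‖z θ‖ ^ 4) /
          (‖1 - z θ‖ ^ 2 * ‖1 - (lam : ℂ) * z θ‖ ^ 2)
      = ((m + lam) * (σ₁₁ + σ₂₂ / m) + 2 * (1 + lam) * σ₁₂) /
          (m ^ 2 * (m - lam) * (m - lam ^ 2)) := by
  obtain ⟨t, ht, rfl⟩ : ∃ t, 1 < t ∧ t ^ 2 = m :=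
    ⟨√m, by simpa using Real.sqrt_lt_sqrt zero_le_one hm, Real.sq_sqrt (by linarith)⟩
  rw [Real.sqrt_sq (by linarith)] at hlam hz
  have ht0 : 0 < t := by linarith
  have hr : |t⁻¹| < 1 := by rw [abs_inv, abs_of_pos ht0]; exact inv_lt_one_of_one_lt₀ ht
  have hs : |lam * t⁻¹| < 1 := by
    rw [abs_mul, abs_inv, abs_of_pos ht0, ← div_eq_mul_inv, div_lt_one ht0]; exact hlam
  have hintegrand : ∀ θ, (σ₁₁ * ‖z θ‖ ^ 2 + 2 * σ₁₂ * (z θ).re * ‖z θ‖ ^ 2 + σ₂₂ * ‖z θ‖ ^ 4) /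
      (‖1 - z θ‖ ^ 2 * ‖1 - (lam : ℂ) * z θ‖ ^ 2)
      = (σ₁₁ * t⁻¹ ^ 2 + σ₂₂ * t⁻¹ ^ 4 + 2 * σ₁₂ * t⁻¹ ^ 3 * cos θ) /
          (poissonDen t⁻¹ θ * poissonDen (lam * t⁻¹) θ) := by
    intro θ
    rw [hz θ, ← mul_assoc, ← Complex.ofReal_mul, norm_one_sub_ofReal_mul_exp_sq,
      norm_one_sub_ofReal_mul_exp_sq, Complex.norm_mul, Complex.norm_exp_ofReal_mul_I,
      Complex.norm_real, Real.norm_of_nonneg (by positivity), Complex.re_ofReal_mul,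
      Complex.exp_ofReal_mul_I_re]
    ring
  rw [intervalIntegral.integral_congr fun θ _ => hintegrand θ,
    integral_div_poissonDen_mul hr hs]
  have hlt := abs_lt.mp hlam
  have h1 : t ^ 2 - 1 ≠ 0 := by nlinarith
  have h2 : t ^ 2 - lam ≠ 0 := by nlinarith
  have h3 : t ^ 2 - lam ^ 2 ≠ 0 := by nlinarith
  field_simp
end

section
/- Suppose 1 ≤ R < m and Σ_{k≥1} μ_k R^{−k} < ∞. Let λ be complex with |λ| > R, λ ≠ m, μ̂(1/λ) = 1, and additionally μ̂'(1/λ) ≠ 0, where μ̂'(w) := Σ_{k≥1} k·μ_k·w^{k−1}. Then the eigenvector u_λ := (λ^{−k} − m^{−k})_{k≥0} does not belong to the range of λ·Id − T; consequently the kernel and the range of λ·Id − T on ℓ²_R intersect only in {0}. -/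
/-!
Solving `(λ - T) a = β u_λ` coordinate by coordinate expresses `a` in closed form through the
single unknown `χ(a)`. Substituting this closed form into the series defining `χ(a)` and using
`μ̂(1/λ) = μ̂(1/m) = 1`, the unknown cancels and what remains is `β (λ⁻² - λ⁻¹) μ̂'(1/λ) = 0`,
so `β = 0`. Kernel vectors of `λ - T` are multiples of `u_λ`, hence a kernel vector in the
range vanishes.
-/

open scoped BigOperators ENNReal

noncomputable section

/-- the derivative `μ̂'(w) = Σ_{k≥1} k μ_k w^{k-1}` -/
def dgenFun (μ : ℕ → ℝ) (w : ℂ) : ℂ := ∑' k, ((k + 1 : ℕ) : ℂ) * (μ (k + 1) : ℂ) * w ^ k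

lemma eq_of_sub_Tseq_eq_smul (μ : ℕ → ℝ) {m : ℝ} {lam β : ℂ} {a : ℕ → ℂ}
    (hlam : lam ≠ 0) (hm : (m : ℂ) ≠ 0) (hlamm : lam ≠ m)
    (h : ∀ k, lam * a k - Tseq μ m a k = β * (lam⁻¹ ^ k - (m : ℂ)⁻¹ ^ k)) (k : ℕ) :
    a k = β * k * lam⁻¹ ^ (k + 1)
      + (chiSeq μ a - β) / (lam - m) * ((m : ℂ)⁻¹ ^ k - lam⁻¹ ^ k) := by
  set c := (chiSeq μ a - β) / (lam - m)
  have hc : c * (lam - m) = chiSeq μ a - β := div_mul_cancel₀ _ (sub_ne_zero.2 hlamm)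
  have hlam' : lam * lam⁻¹ = 1 := mul_inv_cancel₀ hlam
  have hm' : (m : ℂ) * (m : ℂ)⁻¹ = 1 := mul_inv_cancel₀ hm
  induction k with
  | zero =>
    have h0 := h 0
    simp only [Tseq, shiftSeq, vSeq, if_pos, pow_zero, sub_self, mul_zero, add_zero,
      sub_zero, mul_eq_zero] at h0
    simp [h0.resolve_left hlam]
  | succ k ih =>
    have hk := h (k + 1)
    simp only [Tseq, shiftSeq, vSeq, Nat.succ_ne_zero, if_false, Nat.add_sub_cancel] at hk
    apply mul_left_cancel₀ hlam
    rw [show lam * a (k + 1) = a k + chiSeq μ a * (m : ℂ)⁻¹ ^ (k + 1)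
        + β * (lam⁻¹ ^ (k + 1) - (m : ℂ)⁻¹ ^ (k + 1)) by linear_combination hk, ih]
    push_cast
    simp only [pow_succ]
    linear_combination (c * lam⁻¹ ^ k - β * (k + 1) * lam⁻¹ ^ k * lam⁻¹) * hlam'
      - c * (m : ℂ)⁻¹ ^ k * hm' - (m : ℂ)⁻¹ ^ k * (m : ℂ)⁻¹ * hc

lemma summable_genFun_terms {μ : ℕ → ℝ} (hμnn : ∀ k, 0 ≤ μ k) {r : ℝ}
    (hμr : Summable fun k : ℕ => μ (k + 1) * r ^ (k + 1)) {w : ℂ} (hw : ‖w‖ ≤ r) :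
    Summable fun k : ℕ => (μ (k + 1) : ℂ) * w ^ (k + 1) := by
  refine hμr.of_norm_bounded fun k => ?_
  rw [norm_mul, norm_pow, Complex.norm_real, Real.norm_of_nonneg (hμnn _)]
  exact mul_le_mul_of_nonneg_left (pow_le_pow_left₀ (norm_nonneg w) hw _) (hμnn _)

lemma summable_dgenFun_terms {μ : ℕ → ℝ} (hμnn : ∀ k, 0 ≤ μ k) {r : ℝ}
    (hμr : Summable fun k : ℕ => μ (k + 1) * r ^ (k + 1)) {w : ℂ} (hw : ‖w‖ < r) :
    Summable fun k : ℕ => ((k + 1 : ℕ) : ℂ) * (μ (k + 1) : ℂ) * w ^ k := by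
  have hr : 0 < r := (norm_nonneg w).trans_lt hw
  obtain ⟨M, hM⟩ : ∃ M, ∀ k : ℕ, μ (k + 1) * r ^ (k + 1) ≤ M :=
    ⟨_, fun k => hμr.le_tsum k fun j _ => mul_nonneg (hμnn _) (pow_nonneg hr.le _)⟩
  set q := ‖w‖ / r
  have hq : ‖q‖ < 1 := by
    rw [Real.norm_of_nonneg (by positivity)]
    exact (div_lt_one hr).2 hw
  have hgeom : Summable fun k : ℕ => ((k : ℝ) + 1) * q ^ k := by
    refine ((summable_pow_mul_geometric_of_norm_lt_one 1 hq).add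
      (summable_geometric_of_norm_lt_one hq)).congr fun k => ?_
    ring
  refine (hgeom.mul_left (M / r)).of_norm_bounded fun k => ?_
  rw [norm_mul, norm_mul, norm_pow, Complex.norm_natCast, Complex.norm_real,
    Real.norm_of_nonneg (hμnn _)]
  have hwq : ‖w‖ ^ k = q ^ k * r ^ (k + 1) / r := by
    rw [div_pow, pow_succ]
    field_simp
  calc ((k + 1 : ℕ) : ℝ) * μ (k + 1) * ‖w‖ ^ k
      = (μ (k + 1) * r ^ (k + 1)) * (((k : ℝ) + 1) * q ^ k) / r := by
        rw [hwq]; push_cast; ring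
    _ ≤ M * (((k : ℝ) + 1) * q ^ k) / r := by gcongr; exact hM k
    _ = M / r * (((k : ℝ) + 1) * q ^ k) := by ring

lemma hasSum_chiSum {μ : ℕ → ℝ} {w z D β c : ℂ} {a : ℕ → ℂ} (hw : w ≠ 0) (hz : z ≠ 0)
    (hμw : HasSum (fun k : ℕ => (μ (k + 1) : ℂ) * w ^ (k + 1)) 1)
    (hμz : HasSum (fun k : ℕ => (μ (k + 1) : ℂ) * z ^ (k + 1)) 1)
    (hD : HasSum (fun k : ℕ => ((k + 1 : ℕ) : ℂ) * (μ (k + 1) : ℂ) * w ^ k) D)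
    (ha : ∀ k, a k = β * k * w ^ (k + 1) + c * (z ^ k - w ^ k)) :
    HasSum (chiSum μ a) (β * ((w ^ 2 - w) * D + 1) + c * (w⁻¹ - z⁻¹)) := by
  have hw' : w * w⁻¹ = 1 := mul_inv_cancel₀ hw
  have hz' : z * z⁻¹ = 1 := mul_inv_cancel₀ hz
  have H := ((hD.mul_left (β * (w ^ 2 - w))).add (hμw.mul_left (β + c * (w⁻¹ - 1)))).add
    (hμz.mul_left (c * (1 - z⁻¹)))
  rw [show β * ((w ^ 2 - w) * D + 1) + c * (w⁻¹ - z⁻¹)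
    = β * (w ^ 2 - w) * D + (β + c * (w⁻¹ - 1)) * 1 + c * (1 - z⁻¹) * 1 by ring]
  refine H.congr_fun fun k => ?_
  simp only [chiSum, ha]
  push_cast
  simp only [pow_succ]
  linear_combination (c * μ (k + 1) * z ^ k) * hz' - (c * μ (k + 1) * w ^ k) * hw'

lemma eq_zero_of_sub_Tseq_eq_smul {μ : ℕ → ℝ} {m : ℝ} {lam β : ℂ} {a : ℕ → ℂ}
    (hlam0 : lam ≠ 0) (hlam1 : lam ≠ 1) (hm : (m : ℂ) ≠ 0) (hlamm : lam ≠ m)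
    (hμlam : HasSum (fun k : ℕ => (μ (k + 1) : ℂ) * lam⁻¹ ^ (k + 1)) 1)
    (hμm : HasSum (fun k : ℕ => (μ (k + 1) : ℂ) * (m : ℂ)⁻¹ ^ (k + 1)) 1)
    (hder : dgenFun μ lam⁻¹ ≠ 0)
    (hD : Summable fun k : ℕ => ((k + 1 : ℕ) : ℂ) * (μ (k + 1) : ℂ) * lam⁻¹ ^ k)
    (h : ∀ k, lam * a k - Tseq μ m a k = β * (lam⁻¹ ^ k - (m : ℂ)⁻¹ ^ k)) : β = 0 := by
  have hχ : chiSeq μ a = _ :=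
    (hasSum_chiSum (D := dgenFun μ lam⁻¹) (inv_ne_zero hlam0) (inv_ne_zero hm) hμlam hμm
      hD.hasSum (eq_of_sub_Tseq_eq_smul μ hlam0 hm hlamm h)).tsum_eq
  rw [inv_inv, inv_inv, div_mul_cancel₀ _ (sub_ne_zero.2 hlamm)] at hχ
  have hfac : lam⁻¹ ^ 2 - lam⁻¹ ≠ 0 := by
    rw [sq, ← mul_sub_one]
    exact mul_ne_zero (inv_ne_zero hlam0) (sub_ne_zero.2 (inv_ne_one.2 hlam1))
  have hzero : β * ((lam⁻¹ ^ 2 - lam⁻¹) * dgenFun μ lam⁻¹) = 0 := by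
    linear_combination -hχ
  exact (mul_eq_zero.mp hzero).resolve_right (mul_ne_zero hfac hder)

theorem statement17_general
    (μ : ℕ → ℝ) (m R : ℝ)
    (hm : 1 < m) (hμnn : ∀ k, 0 ≤ μ k)
    (hμm : HasSum (fun k : ℕ => μ (k + 1) * (m⁻¹) ^ (k + 1)) 1)
    (hR1 : 1 ≤ R)
    (hμR : Summable fun k : ℕ => μ (k + 1) * (R⁻¹) ^ (k + 1))
    (lam : ℂ) (hlam : R < ‖lam‖) (hlamm : lam ≠ (m : ℂ))
    (hroot : genFun μ lam⁻¹ = 1) (hder : dgenFun μ lam⁻¹ ≠ 0)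
    (u : ℕ → ℂ) (hu : u = fun k : ℕ => lam⁻¹ ^ k - ((m : ℂ))⁻¹ ^ k) :
    (¬ ∃ a : ℕ → ℂ, memEllR R a ∧ ∀ k, lam * a k - Tseq μ m a k = u k) ∧
    (∀ g : ℕ → ℂ, memEllR R g →
      (∃ a : ℕ → ℂ, memEllR R a ∧ ∀ k, lam * a k - Tseq μ m a k = g k) →
      (∀ k, lam * g k - Tseq μ m g k = 0) → g = 0) := by
  subst hu
  have hm0 : (m : ℂ) ≠ 0 := Complex.ofReal_ne_zero.2 (by linarith)
  have hlam_gt_one : 1 < ‖lam‖ := hR1.trans_lt hlam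
  have hlam0 : lam ≠ 0 := norm_pos_iff.1 (one_pos.trans hlam_gt_one)
  have hlam1 : lam ≠ 1 := fun h => by simp [h] at hlam_gt_one
  have hw : ‖lam⁻¹‖ < R⁻¹ := by
    rw [norm_inv]; exact inv_strictAnti₀ (by linarith) hlam
  have hμlam := (summable_genFun_terms hμnn hμR hw.le).hasSum_iff.2 hroot
  have hμm' : HasSum (fun k : ℕ => (μ (k + 1) : ℂ) * (m : ℂ)⁻¹ ^ (k + 1)) 1 := by
    have h := Complex.hasSum_ofReal.2 hμm
    push_cast at h
    exact h
  have key : ∀ {a : ℕ → ℂ} {β : ℂ},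
      (∀ k, lam * a k - Tseq μ m a k = β * (lam⁻¹ ^ k - (m : ℂ)⁻¹ ^ k)) → β = 0 :=
    eq_zero_of_sub_Tseq_eq_smul hlam0 hlam1 hm0 hlamm hμlam hμm' hder
      (summable_dgenFun_terms hμnn hμR hw)
  refine ⟨fun ⟨a, _, ha⟩ => one_ne_zero (key (β := 1) fun k => by rw [ha, one_mul]), ?_⟩
  rintro g - ⟨b, -, hb⟩ hg
  set c := chiSeq μ g / (lam - m)
  have hgc : ∀ k, g k = -c * (lam⁻¹ ^ k - (m : ℂ)⁻¹ ^ k) := fun k => by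
    rw [eq_of_sub_Tseq_eq_smul μ hlam0 hm0 hlamm (a := g) (β := 0)
      (fun k => by rw [hg, zero_mul]) k]
    simp only [sub_zero, zero_mul, c]; ring
  have hc : -c = 0 := key fun k => by rw [hb, hgc]
  funext k
  rw [hgc, hc, zero_mul, Pi.zero_apply]

/-- For `|λ| > R`, `λ ≠ m`, `μ̂(1/λ) = 1`, `μ̂'(1/λ) ≠ 0`: the eigenvector
`u_λ = (λ^{-k} − m^{-k})_k` is not in the range of `λ·Id − T` on `ℓ²_R`; consequently the
kernel and the range of `λ·Id − T` intersect only in `{0}`. -/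
theorem statement17
    (μ : ℕ → ℝ) (m R : ℝ)
    (hm : 1 < m) (hμnn : ∀ k, 0 ≤ μ k)
    (hμm : HasSum (fun k : ℕ => μ (k + 1) * (m⁻¹) ^ (k + 1)) 1)
    (hR1 : 1 ≤ R) (hRm : R < m)
    (hμR : Summable fun k : ℕ => μ (k + 1) * (R⁻¹) ^ (k + 1))
    (lam : ℂ) (hlam : R < ‖lam‖) (hlamm : lam ≠ (m : ℂ))
    (hroot : genFun μ lam⁻¹ = 1) (hder : dgenFun μ lam⁻¹ ≠ 0)
    (u : ℕ → ℂ) (hu : u = fun k : ℕ => lam⁻¹ ^ k - ((m : ℂ))⁻¹ ^ k) :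
    (¬ ∃ a : ℕ → ℂ, memEllR R a ∧ ∀ k, lam * a k - Tseq μ m a k = u k) ∧
    (∀ g : ℕ → ℂ, memEllR R g →
      (∃ a : ℕ → ℂ, memEllR R a ∧ ∀ k, lam * a k - Tseq μ m a k = g k) →
      (∀ k, lam * g k - Tseq μ m g k = 0) → g = 0) :=
  statement17_general μ m R hm hμnn hμm hR1 hμR lam hlam hlamm hroot hder u hu
end
end
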